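/- arXiv:2504.19031 — 2 statements merged into one kernel-verified Lean document; each statement's English description precedes it below -/
import Mathlib

section
/- The constant term of (x + x^{-1} + y + y^{-1})^n, as a Laurent polynomial in two variables over the integers, equals (binomial(n, n/2))^2 when n is even and equals 0 when n is odd. -/
/-!
The monomial substitution `x = u v`, `y = u v⁻¹`, i.e. the injective exponent map
`(a, b) ↦ (a + b, a - b)`, fixes the constant term and turns `P` into `(u + u⁻¹) (v + v⁻¹)`.
The constant term of `(u + u⁻¹)ⁿ (v + v⁻¹)ⁿ` is the square of that of `(u + u⁻¹)ⁿ`, which the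
binomial theorem identifies as `choose n (n / 2)` for even `n` and `0` for odd `n`.
-/

open LaurentPolynomial

noncomputable def P2 : AddMonoidAlgebra ℤ (ℤ × ℤ) :=
  AddMonoidAlgebra.single (1, 0) 1 + AddMonoidAlgebra.single (-1, 0) 1 +
    AddMonoidAlgebra.single (0, 1) 1 + AddMonoidAlgebra.single (0, -1) 1

open AddMonoidAlgebra Function

namespace AddMonoidAlgebra

variable {R M N : Type*} [Semiring R]

theorem coeff_mapDomain_of_injective {f : M → N} (hf : Injective f) (x : R[M]) (m : M) :
    (mapDomain f x).coeff (f m) = x.coeff m :=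
  Finsupp.mapDomain_apply hf x.coeff m

theorem mapDomain_pow [AddMonoid M] [AddMonoid N] (f : M →+ N) (x : R[M]) (n : ℕ) :
    mapDomain f (x ^ n) = mapDomain f x ^ n :=
  map_pow (mapDomainRingHom R f) x n

theorem coeff_mapDomain_inl_mul_mapDomain_inr [AddZeroClass M] [AddZeroClass N]
    (x : R[M]) (y : R[N]) (m : M) (n : N) :
    (mapDomain (AddMonoidHom.inl M N) x * mapDomain (AddMonoidHom.inr M N) y).coeff (m, n) =
      x.coeff m * y.coeff n := by
  classical
  induction x using induction_linear with
  | zero => simp [mapDomain_zero]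
  | add x x' hx hx' =>
    rw [mapDomain_add, add_mul, coeff_add, Finsupp.add_apply, hx, hx', coeff_add,
      Finsupp.add_apply, add_mul]
  | single a r =>
    induction y using induction_linear with
    | zero => simp [mapDomain_zero]
    | add y y' hy hy' =>
      rw [mapDomain_add, mul_add, coeff_add, Finsupp.add_apply, hy, hy', coeff_add,
        Finsupp.add_apply, mul_add]
    | single b s =>
      simp only [mapDomain_single, single_mul_single, AddMonoidHom.inl_apply,
        AddMonoidHom.inr_apply, Prod.mk_add_mk, add_zero, zero_add, coeff_single,
        Finsupp.single_apply, Prod.mk.injEq]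
      split_ifs <;> simp_all

end AddMonoidAlgebra

namespace LaurentPolynomial

variable {R : Type*} [CommSemiring R]

theorem T_one_add_T_neg_one_pow (n : ℕ) :
    (T 1 + T (-1) : R[T;T⁻¹]) ^ n =
      ∑ k ∈ Finset.range (n + 1), C (n.choose k : R) * T (2 * k - n) := by
  rw [add_pow]
  refine Finset.sum_congr rfl fun k hk => ?_
  rw [T_pow, T_pow, ← T_add, ← map_natCast C, mul_comm]
  congr 2
  push_cast [Nat.cast_sub (Finset.mem_range_succ_iff.mp hk)]
  ring

theorem coeff_zero_T_one_add_T_neg_one_pow (n : ℕ) :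
    ((T 1 + T (-1) : R[T;T⁻¹]) ^ n).coeff 0 = if Even n then (n.choose (n / 2) : R) else 0 := by
  classical
  simp only [T_one_add_T_neg_one_pow, ← single_eq_C_mul_T, coeff_sum, coeff_single,
    Finsupp.finsetSum_apply, Finsupp.single_apply]
  split_ifs with hn
  · obtain ⟨m, rfl⟩ := hn
    rw [Finset.sum_eq_single m]
    · simp [← two_mul]
    · intro k _ hk
      rw [if_neg]
      omega
    · simp
  · exact Finset.sum_eq_zero fun k _ => if_neg fun h => hn ⟨k, by omega⟩

end LaurentPolynomial

def sumDiff : ℤ × ℤ →+ ℤ × ℤ :=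
  AddMonoidHom.mk' (fun p => (p.1 + p.2, p.1 - p.2)) fun a b => by ext <;> dsimp <;> ring

theorem sumDiff_injective : Injective sumDiff := fun a b h => by
  simp only [sumDiff, AddMonoidHom.mk'_apply, Prod.mk.injEq] at h
  ext <;> omega

theorem mapDomain_sumDiff_P2 :
    mapDomain sumDiff P2 = mapDomain (AddMonoidHom.inl ℤ ℤ) (T 1 + T (-1) : ℤ[T;T⁻¹]) *
      mapDomain (AddMonoidHom.inr ℤ ℤ) (T 1 + T (-1) : ℤ[T;T⁻¹]) := by
  simp only [P2, T, mapDomain_add, mapDomain_single, add_mul, mul_add, single_mul_single]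
  simp [sumDiff]
  abel

theorem stmt0 (n : ℕ) :
    (P2 ^ n).coeff (0, 0) = if Even n then ((n.choose (n / 2) : ℤ)) ^ 2 else 0 := by
  calc (P2 ^ n).coeff (0, 0) = (mapDomain sumDiff (P2 ^ n)).coeff (sumDiff 0) :=
        (coeff_mapDomain_of_injective sumDiff_injective _ 0).symm
    _ = (mapDomain (AddMonoidHom.inl ℤ ℤ) ((T 1 + T (-1) : ℤ[T;T⁻¹]) ^ n) *
          mapDomain (AddMonoidHom.inr ℤ ℤ) ((T 1 + T (-1) : ℤ[T;T⁻¹]) ^ n)).coeff (0, 0) := by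
        rw [mapDomain_pow, mapDomain_sumDiff_P2, mul_pow, mapDomain_pow, mapDomain_pow, map_zero,
          Prod.mk_zero_zero]
    _ = if Even n then ((n.choose (n / 2) : ℤ)) ^ 2 else 0 := by
        rw [coeff_mapDomain_inl_mul_mapDomain_inr, coeff_zero_T_one_add_T_neg_one_pow]
        split_ifs <;> simp [sq]
end

section
/- For the Laurent polynomial P(t) = 4t^2 + 6t + 1 + 6t^{-1} over 𝔽₇, the constant term of P(t)^n is nonzero in 𝔽₇ for all n with 0 ≤ n < 49 = 7^2, giving a counterexample to the conjecture that the first zero of ct(P^n) mod p must occur before p^{deg P}. -/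
/-!
Since `t · P(t) = Q(t) := 6 + t + 6t² + 4t³` is an honest polynomial, the constant term of `P^n`
is the coefficient of `tⁿ` in `Qⁿ`. For `n < 49` these coefficients are computed by the kernel,
working with dense coefficient lists instead of the noncomputable type `(ZMod 7)[X]`.
-/

open LaurentPolynomial

noncomputable def P : LaurentPolynomial (ZMod 7) := 4 * T 2 + 6 * T 1 + 1 + 6 * T (-1)

open Polynomial

namespace Polynomial

variable {R : Type*} [Semiring R]

/-- The list `[a₀, a₁, …, aₖ]` encodes the polynomial `a₀ + a₁ X + ⋯ + aₖ Xᵏ`. -/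
noncomputable def ofList : List R → R[X]
  | [] => 0
  | a :: l => C a + X * ofList l

def listAdd : List R → List R → List R
  | [], m => m
  | l, [] => l
  | a :: l, b :: m => (a + b) :: listAdd l m

def listMul : List R → List R → List R
  | [], _ => []
  | a :: l, q => listAdd (q.map (a * ·)) (0 :: listMul l q)

def listPow (q : List R) : ℕ → List R
  | 0 => [1]
  | n + 1 => listMul (listPow q n) q

theorem coeff_ofList (l : List R) (i : ℕ) : (ofList l).coeff i = l.getD i 0 := by
  induction l generalizing i with
  | nil => simp [ofList]
  | cons a l ih => cases i <;> simp [ofList, coeff_X_mul, ih]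

theorem ofList_listAdd (l m : List R) : ofList (listAdd l m) = ofList l + ofList m := by
  induction l, m using listAdd.induct with
  | case1 m => simp [listAdd, ofList]
  | case2 l h => cases l <;> simp_all [listAdd, ofList]
  | case3 a l b m ih => simp only [listAdd, ofList, ih, C_add, mul_add]; abel

theorem ofList_map_mul (a : R) (l : List R) : ofList (l.map (a * ·)) = C a * ofList l := by
  induction l with
  | nil => simp [ofList]
  | cons b l ih => simp only [List.map_cons, ofList, ih, C_mul, mul_add, ← mul_assoc, X_mul_C]

theorem ofList_listMul (l q : List R) : ofList (listMul l q) = ofList l * ofList q := by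
  induction l with
  | nil => simp [listMul, ofList]
  | cons a l ih =>
    simp only [listMul, ofList_listAdd, ofList_map_mul, ofList, ih, C_0, zero_add, add_mul,
      mul_assoc]

theorem ofList_listPow (q : List R) (n : ℕ) : ofList (listPow q n) = ofList q ^ n := by
  induction n with
  | zero => simp [listPow, ofList]
  | succ n ih => rw [listPow, ofList_listMul, ih, pow_succ]

end Polynomial

namespace LaurentPolynomial

variable {R : Type*} [Semiring R]

theorem coeff_T_mul (n k : ℤ) (f : R[T;T⁻¹]) : (T n * f).coeff k = f.coeff (k - n) := by
  rw [T, AddMonoidAlgebra.coeff_single_mul_apply, one_mul, neg_add_eq_sub]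

theorem coeff_toLaurent_natCast (f : R[X]) (n : ℕ) : (toLaurent f).coeff n = f.coeff n := by
  rw [coeff_toLaurent, ← Nat.castEmbedding_apply,
    Finsupp.mapDomain_apply Nat.castEmbedding.injective]
  rfl

theorem coeff_zero_T_neg_mul_toLaurent (f : R[X]) (n : ℕ) :
    (T (-n) * toLaurent f).coeff 0 = f.coeff n := by
  rw [coeff_T_mul, zero_sub, neg_neg, coeff_toLaurent_natCast]

end LaurentPolynomial

theorem P_eq_T_neg_one_mul_toLaurent :
    P = T (-1) * toLaurent (ofList [(6 : ZMod 7), 1, 6, 4]) := by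
  have hT : (T (-1) : (ZMod 7)[T;T⁻¹]) * T 1 = 1 := by rw [← T_add]; rfl
  simp only [P, ofList, map_add, map_mul, toLaurent_X, map_ofNat, map_one, mul_zero, add_zero,
    show (2 : ℤ) = 1 + 1 from rfl, T_add]
  linear_combination (-(1 + 6 * T 1 + 4 * T 1 * T 1) : (ZMod 7)[T;T⁻¹]) * hT

set_option maxRecDepth 10000 in
theorem getD_listPow_self_ne_zero :
    ∀ n < 49, (listPow [(6 : ZMod 7), 1, 6, 4] n).getD n 0 ≠ 0 := by
  decide

theorem stmt6 : ∀ n : ℕ, n < 7 ^ 2 → (P ^ n).coeff 0 ≠ 0 := by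
  intro n hn
  rw [P_eq_T_neg_one_mul_toLaurent, mul_pow, T_pow, mul_neg_one, ← map_pow, ← ofList_listPow,
    coeff_zero_T_neg_mul_toLaurent, coeff_ofList]
  exact getD_listPow_self_ne_zero n hn
end
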